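/- arXiv:1803.07993 — 2 statements merged into one kernel-verified Lean document; each statement's English description precedes it below -/
import Mathlib

section
/- Let λ, μ₁, μ₂ > 0 be real numbers, define π₀ = μ₁μ₂/((μ₁+λ)(μ₂+λ)), π₁ = (λ/μ₁)·((μ₁+μ₂+λ)/(μ₁+μ₂))·π₀, π₂ = (λ/μ₂)·π₀, and π₃ = (λ²/(μ₂(μ₁+μ₂)))·π₀, and suppose the real numbers v₀₀, v₁₀, v₁₁, v₂₀, v₂₂, v₃₀, v₃₁, v₃₂ satisfy: v₀₀·λ = π₀ + μ₂·v₂₂; v₁₀·μ₁ = π₁ + λ·v₀₀ + μ₂·v₃₂; v₁₁·(λ+μ₁) = π₁ + μ₂·v₃₁; v₂₀·(λ+μ₂) = π₂ + μ₁·v₁₀ + μ₁·v₃₀; v₂₂·(λ+μ₂) = π₂ + μ₁·v₁₁ + μ₁·v₃₁; v₃₀·(μ₁+μ₂) = π₃ + λ·v₂₀; v₃₁·(λ+μ₁+μ₂) = π₃; v₃₂·(μ₁+μ₂) = π₃ + λ·v₂₂. Then v₀₀ + v₁₀ + v₂₀ + v₃₀ = 1/λ + 1/μ₁ + 1/μ₂.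 -/
/-!
Read the age process through three nested observers: the age `a₁ = v₀₀ + v₁₁ + v₂₂ + v₃₁` at
node 1 (of the freshest update anywhere in the system, `x₁` whenever node 1 is busy), the age
`a₂ = v₀₀ + v₁₀ + v₂₂ + v₃₂` at node 2 (of the freshest update at node 2 or beyond), and the
age `a₀ = v₀₀ + v₁₀ + v₂₀ + v₃₀` at the monitor. Suitable sums of the balance equations show
that each stage adds the mean of its own exponential delay:
`λ · a₁ = Σ π = 1`, `μ₁ · (a₂ - a₁) = λ · a₁` and `μ₂ · (a₀ - a₂) = Σ π`.
-/

theorem stationary_probs_sum_eq_one {lam μ1 μ2 : ℝ} (hlam : 0 < lam) (hμ1 : 0 < μ1)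
    (hμ2 : 0 < μ2) {π0 π1 π2 π3 : ℝ}
    (hπ0 : π0 = μ1 * μ2 / ((μ1 + lam) * (μ2 + lam)))
    (hπ1 : π1 = (lam / μ1) * ((μ1 + μ2 + lam) / (μ1 + μ2)) * π0)
    (hπ2 : π2 = (lam / μ2) * π0)
    (hπ3 : π3 = (lam ^ 2 / (μ2 * (μ1 + μ2))) * π0) :
    π0 + π1 + π2 + π3 = 1 := by
  subst hπ0 hπ1 hπ2 hπ3
  field_simp
  ring

section BalanceEquations

variable {lam μ1 μ2 π0 π1 π2 π3 v00 v10 v11 v20 v22 v30 v31 v32 : ℝ}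

theorem lam_mul_age_at_node1
    (h1 : v00 * lam = π0 + μ2 * v22)
    (h3 : v11 * (lam + μ1) = π1 + μ2 * v31)
    (h5 : v22 * (lam + μ2) = π2 + μ1 * v11 + μ1 * v31)
    (h7 : v31 * (lam + μ1 + μ2) = π3) :
    lam * (v00 + v11 + v22 + v31) = π0 + π1 + π2 + π3 := by
  linear_combination h1 + h3 + h5 + h7

theorem μ1_mul_age_at_node2_sub_age_at_node1
    (h2 : v10 * μ1 = π1 + lam * v00 + μ2 * v32)
    (h3 : v11 * (lam + μ1) = π1 + μ2 * v31)
    (h7 : v31 * (lam + μ1 + μ2) = π3)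
    (h8 : v32 * (μ1 + μ2) = π3 + lam * v22) :
    μ1 * ((v00 + v10 + v22 + v32) - (v00 + v11 + v22 + v31)) =
      lam * (v00 + v11 + v22 + v31) := by
  linear_combination h2 - h3 - h7 + h8

theorem μ2_mul_age_at_monitor_sub_age_at_node2
    (h1 : v00 * lam = π0 + μ2 * v22)
    (h2 : v10 * μ1 = π1 + lam * v00 + μ2 * v32)
    (h4 : v20 * (lam + μ2) = π2 + μ1 * v10 + μ1 * v30)
    (h6 : v30 * (μ1 + μ2) = π3 + lam * v20) :
    μ2 * ((v00 + v10 + v20 + v30) - (v00 + v10 + v22 + v32)) = π0 + π1 + π2 + π3 := by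
  linear_combination h1 + h2 + h4 + h6

end BalanceEquations

/-- The eight nontrivial SHS stationary balance equations for the two-node
preemptive line network imply that the average age at the monitor is
`v₀₀ + v₁₀ + v₂₀ + v₃₀ = 1/λ + 1/μ₁ + 1/μ₂`. -/
theorem two_node_age (lam μ1 μ2 : ℝ) (hlam : 0 < lam) (hμ1 : 0 < μ1) (hμ2 : 0 < μ2)
    (π0 π1 π2 π3 : ℝ)
    (hπ0 : π0 = μ1 * μ2 / ((μ1 + lam) * (μ2 + lam)))
    (hπ1 : π1 = (lam / μ1) * ((μ1 + μ2 + lam) / (μ1 + μ2)) * π0)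
    (hπ2 : π2 = (lam / μ2) * π0)
    (hπ3 : π3 = (lam ^ 2 / (μ2 * (μ1 + μ2))) * π0)
    (v00 v10 v11 v20 v22 v30 v31 v32 : ℝ)
    (h1 : v00 * lam = π0 + μ2 * v22)
    (h2 : v10 * μ1 = π1 + lam * v00 + μ2 * v32)
    (h3 : v11 * (lam + μ1) = π1 + μ2 * v31)
    (h4 : v20 * (lam + μ2) = π2 + μ1 * v10 + μ1 * v30)
    (h5 : v22 * (lam + μ2) = π2 + μ1 * v11 + μ1 * v31)
    (h6 : v30 * (μ1 + μ2) = π3 + lam * v20)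
    (h7 : v31 * (lam + μ1 + μ2) = π3)
    (h8 : v32 * (μ1 + μ2) = π3 + lam * v22) :
    v00 + v10 + v20 + v30 = 1 / lam + 1 / μ1 + 1 / μ2 := by
  have hsum := stationary_probs_sum_eq_one hlam hμ1 hμ2 hπ0 hπ1 hπ2 hπ3
  have hnode1 := lam_mul_age_at_node1 h1 h3 h5 h7
  have hnode2 := μ1_mul_age_at_node2_sub_age_at_node1 h2 h3 h7 h8
  have hmonitor := μ2_mul_age_at_monitor_sub_age_at_node2 h1 h2 h4 h6
  rw [hsum] at hnode1 hmonitor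
  rw [hnode1] at hnode2
  field_simp
  linear_combination lam * μ1 * hmonitor + lam * μ2 * hnode2 + μ1 * μ2 * hnode1
end

section
/- Let λ, μ₁, μ₂ > 0 be real numbers and define π₀, π₁, π₂, π₃ by π₀ = μ₁μ₂/((μ₁+λ)(μ₂+λ)), π₁ = (λ/μ₁)·((μ₁+μ₂+λ)/(μ₁+μ₂))·π₀, π₂ = (λ/μ₂)·π₀, π₃ = (λ²/(μ₂(μ₁+μ₂)))·π₀. Then there exist nonnegative real numbers v₀₀, v₁₀, v₁₁, v₂₀, v₂₂, v₃₀, v₃₁, v₃₂ satisfying the system: v₀₀·λ = π₀ + μ₂·v₂₂; v₁₀·μ₁ = π₁ + λ·v₀₀ + μ₂·v₃₂; v₁₁·(λ+μ₁) = π₁ + μ₂·v₃₁; v₂₀·(λ+μ₂) = π₂ + μ₁·v₁₀ + μ₁·v₃₀; v₂₂·(λ+μ₂) = π₂ + μ₁·v₁₁ + μ₁·v₃₁; v₃₀·(μ₁+μ₂) = π₃ + λ·v₂₀; v₃₁·(λ+μ₁+μ₂) = π₃; v₃₂·(μ₁+μ₂) = π₃ + λ·v₂₂. -/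
/-- Existence of a nonnegative solution to the eight nontrivial SHS
stationary balance equations for the two-node preemptive line network. -/
theorem two_node_exists_nonneg (lam μ1 μ2 : ℝ) (hlam : 0 < lam) (hμ1 : 0 < μ1)
    (hμ2 : 0 < μ2)
    (π0 π1 π2 π3 : ℝ)
    (hπ0 : π0 = μ1 * μ2 / ((μ1 + lam) * (μ2 + lam)))
    (hπ1 : π1 = (lam / μ1) * ((μ1 + μ2 + lam) / (μ1 + μ2)) * π0)
    (hπ2 : π2 = (lam / μ2) * π0)
    (hπ3 : π3 = (lam ^ 2 / (μ2 * (μ1 + μ2))) * π0) :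
    ∃ v00 v10 v11 v20 v22 v30 v31 v32 : ℝ,
      0 ≤ v00 ∧ 0 ≤ v10 ∧ 0 ≤ v11 ∧ 0 ≤ v20 ∧ 0 ≤ v22 ∧ 0 ≤ v30 ∧ 0 ≤ v31 ∧ 0 ≤ v32 ∧
      v00 * lam = π0 + μ2 * v22 ∧
      v10 * μ1 = π1 + lam * v00 + μ2 * v32 ∧
      v11 * (lam + μ1) = π1 + μ2 * v31 ∧
      v20 * (lam + μ2) = π2 + μ1 * v10 + μ1 * v30 ∧
      v22 * (lam + μ2) = π2 + μ1 * v11 + μ1 * v31 ∧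
      v30 * (μ1 + μ2) = π3 + lam * v20 ∧
      v31 * (lam + μ1 + μ2) = π3 ∧
      v32 * (μ1 + μ2) = π3 + lam * v22 := by
  have h0 : (0:ℝ) ≤ π0 := by rw [hπ0]; positivity
  have h1 : (0:ℝ) ≤ π1 := by rw [hπ1, hπ0]; positivity
  have h2 : (0:ℝ) ≤ π2 := by rw [hπ2, hπ0]; positivity
  have h3 : (0:ℝ) ≤ π3 := by rw [hπ3, hπ0]; positivity
  clear hπ0 hπ1 hπ2 hπ3
  set v31 : ℝ := π3 / (lam + μ1 + μ2) with hv31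
  set v11 : ℝ := (π1 + μ2 * v31) / (lam + μ1) with hv11
  set v22 : ℝ := (π2 + μ1 * v11 + μ1 * v31) / (lam + μ2) with hv22
  set v00 : ℝ := (π0 + μ2 * v22) / lam with hv00
  set v32 : ℝ := (π3 + lam * v22) / (μ1 + μ2) with hv32
  set v10 : ℝ := (π1 + lam * v00 + μ2 * v32) / μ1 with hv10
  set v20 : ℝ := ((π2 + μ1 * v10) * (μ1 + μ2) + μ1 * π3) / (μ2 * (lam + μ1 + μ2))
    with hv20
  set v30 : ℝ := (π3 + lam * v20) / (μ1 + μ2) with hv30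
  have nv31 : 0 ≤ v31 := by rw [hv31]; positivity
  have nv11 : 0 ≤ v11 := by rw [hv11]; positivity
  have nv22 : 0 ≤ v22 := by rw [hv22]; positivity
  have nv00 : 0 ≤ v00 := by rw [hv00]; positivity
  have nv32 : 0 ≤ v32 := by rw [hv32]; positivity
  have nv10 : 0 ≤ v10 := by rw [hv10]; positivity
  have nv20 : 0 ≤ v20 := by rw [hv20]; positivity
  have nv30 : 0 ≤ v30 := by rw [hv30]; positivity
  refine ⟨v00, v10, v11, v20, v22, v30, v31, v32, nv00, nv10, nv11, nv20, nv22,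
    nv30, nv31, nv32, ?_, ?_, ?_, ?_, ?_, ?_, ?_, ?_⟩
  · rw [hv00]; field_simp
  · rw [hv10]; field_simp
  · rw [hv11]; field_simp
  · rw [hv20, hv30, hv20]; field_simp; ring
  · rw [hv22]; field_simp
  · rw [hv30]; field_simp
  · rw [hv31]; field_simp
  · rw [hv32]; field_simp
end
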